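/- arXiv:2008.04173 — 2 statements merged into one kernel-verified Lean document; each statement's English description precedes it below -/
import Mathlib

section
/- If x is dominant and x + 𝟙 covers x (i.e. the weight μ + δ covers μ in the dominance order on level-m dominant weights), then m = 1 and v(x) = e_i for some i ∈ ℤ/(n+1)ℤ, i.e. the weight is a fundamental weight (up to adding a multiple of δ). -/
/-- Cartan matrix of affine type `A_n^{(1)}`, indexed by `ℤ/(n+1)ℤ`:
`A i i = 2`, `A i j = -1` if `j ≡ i ± 1`, and `0` otherwise. -/
def cartanA (n : ℕ) : Matrix (ZMod (n + 1)) (ZMod (n + 1)) ℤ :=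
  Matrix.of fun i j => if i = j then 2 else if j = i + 1 ∨ j = i - 1 then -1 else 0

/-- Value of the level-`m` weight `m·ω₀ + Σᵢ xᵢ·αᵢ` on the coroot `αⱼ^∨`. -/
def vA (n : ℕ) (m : ℤ) (x : ZMod (n + 1) → ℤ) (j : ZMod (n + 1)) : ℤ :=
  m * (if j = 0 then 1 else 0) + (cartanA n).mulVec x j

/-- Dominance of the coefficient vector `x`. -/
def DomA (n : ℕ) (m : ℤ) (x : ZMod (n + 1) → ℤ) : Prop :=
  ∀ j, 0 ≤ vA n m x j

/-- `y` covers `x` in the componentwise (dominance) order on dominant vectors: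
both are dominant, `x < y`, and no dominant `z` lies strictly between them. -/
def CoversA (n : ℕ) (m : ℤ) (x y : ZMod (n + 1) → ℤ) : Prop :=
  DomA n m x ∧ DomA n m y ∧ x < y ∧ ¬∃ z, DomA n m z ∧ x < z ∧ z < y

/-- The `(n+1)`-cycle graph on `ℤ/(n+1)ℤ` (`j` adjacent to `j ± 1`). -/
def cycleG (n : ℕ) : SimpleGraph (ZMod (n + 1)) :=
  SimpleGraph.fromRel fun i j => j = i + 1

/-- An arc: a nonempty proper subset of `ℤ/(n+1)ℤ` whose induced subgraph in the
`(n+1)`-cycle is connected. -/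
def IsArc (n : ℕ) (K : Set (ZMod (n + 1))) : Prop :=
  K.Nonempty ∧ K ≠ Set.univ ∧ ((cycleG n).induce K).Connected

/-- Indicator vector `χ_K` of a subset `K`, encoding the highest root `α_K`. -/
noncomputable def chi (n : ℕ) (K : Set (ZMod (n + 1))) : ZMod (n + 1) → ℤ :=
  K.indicator 1

/-- The `i`-th standard basis vector, encoding the simple root `αᵢ`. -/
def eA (n : ℕ) (i : ZMod (n + 1)) : ZMod (n + 1) → ℤ :=
  fun j => if j = i then 1 else 0

section Aux

variable {n : ℕ}

lemma myOneNeZero (hn : 2 ≤ n) : (1 : ZMod (n + 1)) ≠ 0 := by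
  intro h
  have := congrArg ZMod.val h
  rw [@ZMod.val_one _ ⟨by omega⟩, ZMod.val_zero] at this
  omega

lemma myTwoNeZero (hn : 2 ≤ n) : (2 : ZMod (n + 1)) ≠ 0 := by
  intro h
  have h2 : ((2 : ℕ) : ZMod (n + 1)) = 0 := by exact_mod_cast h
  have h3 := (ZMod.natCast_eq_zero_iff 2 (n + 1)).mp h2
  have := Nat.le_of_dvd (by norm_num) h3
  omega

/-- The key computation: `(Ax)_l = 2 x_l - x_{l+1} - x_{l-1}`. -/
lemma cartan_mulVec (hn : 2 ≤ n) (x : ZMod (n + 1) → ℤ) (l : ZMod (n + 1)) :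
    (cartanA n).mulVec x l = 2 * x l - x (l + 1) - x (l - 1) := by
  have h1 : l + 1 ≠ l := by
    intro h; exact myOneNeZero hn (by linear_combination h)
  have h2 : l - 1 ≠ l := by
    intro h; exact myOneNeZero hn (by linear_combination -h)
  have h3 : l + 1 ≠ l - 1 := by
    intro h; exact myTwoNeZero hn (by linear_combination h)
  have key : ∀ k, cartanA n l k * x k =
      (if k = l then 2 * x l else 0) + (if k = l + 1 then -x (l + 1) else 0)
        + (if k = l - 1 then -x (l - 1) else 0) := by
    intro k
    simp only [cartanA, Matrix.of_apply]
    by_cases e1 : k = l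
    · rw [e1, if_pos rfl, if_pos rfl, if_neg (Ne.symm h1), if_neg (Ne.symm h2)]; ring
    · by_cases e2 : k = l + 1
      · rw [e2, if_neg (Ne.symm h1), if_pos (Or.inl rfl), if_neg h1, if_pos rfl,
          if_neg h3]
        ring
      · by_cases e3 : k = l - 1
        · rw [e3, if_neg (Ne.symm h2), if_pos (Or.inr rfl), if_neg h2,
            if_neg (Ne.symm h3), if_pos rfl]
          ring
        · rw [if_neg (fun h => e1 h.symm),
            if_neg (show ¬ (k = l + 1 ∨ k = l - 1) from fun h => h.elim e2 e3),
            if_neg e1, if_neg e2, if_neg e3]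
          ring
  unfold Matrix.mulVec dotProduct
  rw [Finset.sum_congr rfl fun k _ => key k]
  rw [Finset.sum_add_distrib, Finset.sum_add_distrib]
  simp only [Finset.sum_ite_eq', Finset.mem_univ, if_pos]
  ring

lemma sum_mulVec (hn : 2 ≤ n) (x : ZMod (n + 1) → ℤ) :
    ∑ l, (cartanA n).mulVec x l = 0 := by
  rw [Finset.sum_congr rfl fun l _ => cartan_mulVec hn x l]
  have e1 : ∑ l : ZMod (n+1), x (l + 1) = ∑ l : ZMod (n+1), x l :=
    Fintype.sum_equiv (Equiv.addRight 1) _ _ (fun l => rfl)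
  have e2 : ∑ l : ZMod (n+1), x (l - 1) = ∑ l : ZMod (n+1), x l :=
    Fintype.sum_equiv (Equiv.subRight 1) _ _ (fun l => rfl)
  rw [Finset.sum_sub_distrib, Finset.sum_sub_distrib, e1, e2, ← Finset.mul_sum]
  ring

lemma sum_vA (hn : 2 ≤ n) (m : ℤ) (x : ZMod (n + 1) → ℤ) :
    ∑ l, vA n m x l = m := by
  unfold vA
  rw [Finset.sum_add_distrib, sum_mulVec hn, ← Finset.mul_sum]
  simp [Finset.sum_ite_eq']

lemma vA_add (m : ℤ) (x y : ZMod (n + 1) → ℤ) (l : ZMod (n + 1)) :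
    vA n m (x + y) l = vA n m x l + (cartanA n).mulVec y l := by
  unfold vA
  rw [Matrix.mulVec_add]
  simp only [Pi.add_apply]
  ring

/-- Pure arithmetic core of the arc-witness dominance check. -/
lemma arcArith (n d t : ℕ) (hn : 2 ≤ n) (hd2 : 2 ≤ d) (hdn : d ≤ n) (ht : t < n + 1) :
    2 * (if 1 ≤ t ∧ t ≤ d - 1 then (1:ℤ) else 0)
      - (if 1 ≤ (t + 1) % (n + 1) ∧ (t + 1) % (n + 1) ≤ d - 1 then 1 else 0)
      - (if 1 ≤ (t + n) % (n + 1) ∧ (t + n) % (n + 1) ≤ d - 1 then 1 else 0)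
    ≥ -(if t = 0 then 1 else 0) - (if t = d then 1 else 0) := by
  rcases eq_or_ne t n with he | htn
  · have e1 : (t + 1) % (n + 1) = 0 := by rw [he]; exact Nat.mod_self _
    have e2 : (t + n) % (n + 1) = n - 1 := by
      rw [he]
      have h : n + n = (n - 1) + (n + 1) := by omega
      rw [h, Nat.add_mod_right]
      exact Nat.mod_eq_of_lt (by omega)
    rw [e1, e2]
    split_ifs <;> omega
  · rcases eq_or_ne t 0 with rfl | ht0
    · have e1 : (0 + 1) % (n + 1) = 1 := Nat.mod_eq_of_lt (by omega)
      have e2 : (0 + n) % (n + 1) = n := by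
        rw [Nat.zero_add]; exact Nat.mod_eq_of_lt (by omega)
      rw [e1, e2]
      split_ifs <;> omega
    · have e1 : (t + 1) % (n + 1) = t + 1 := Nat.mod_eq_of_lt (by omega)
      have e2 : (t + n) % (n + 1) = t - 1 := by
        have h : t + n = (t - 1) + (n + 1) := by omega
        rw [h, Nat.add_mod_right]
        exact Nat.mod_eq_of_lt (by omega)
      rw [e1, e2]
      split_ifs <;> omega

/-- No dominant `z` strictly between `x` and `x + 1` rules out two distinct
positive entries of `v`. -/
lemma no_two (hn : 2 ≤ n) (m : ℤ) (x : ZMod (n + 1) → ℤ) (hx : DomA n m x)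
    (hno : ¬∃ z, DomA n m z ∧ x < z ∧ z < x + 1)
    (i : ZMod (n + 1)) (d : ℕ) (hd2 : 2 ≤ d) (hdn : d ≤ n)
    (hvi : 1 ≤ vA n m x i) (hvj : 1 ≤ vA n m x (i + (d : ZMod (n + 1)))) : False := by
  haveI : Fact (1 < n + 1) := ⟨by omega⟩
  set j : ZMod (n + 1) := i + (d : ZMod (n + 1)) with hj
  have hdval : ((d : ZMod (n + 1))).val = d := ZMod.val_cast_of_lt (by omega)
  have hij : j ≠ i := by
    intro h
    have h0 : (d : ZMod (n + 1)) = 0 := by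
      have := h
      rw [hj] at this
      linear_combination this
    rw [h0, ZMod.val_zero] at hdval; omega
  set χ : ZMod (n + 1) → ℤ :=
    fun l => if 1 ≤ (l - i).val ∧ (l - i).val ≤ d - 1 then 1 else 0 with hχ
  have hχval : ∀ l, χ l = if 1 ≤ (l - i).val ∧ (l - i).val ≤ d - 1 then 1 else 0 :=
    fun l => rfl
  have hneg1 : (-1 : ZMod (n + 1)) = ((n : ℕ) : ZMod (n + 1)) := by
    have h := ZMod.natCast_self (n + 1)
    push_cast at h
    linear_combination -h
  have hnval : (((n : ℕ) : ZMod (n + 1))).val = n := ZMod.val_cast_of_lt (by omega)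
  -- the key pointwise inequality
  have key : ∀ l, (cartanA n).mulVec χ l ≥
      -(if l = i then 1 else 0) - (if l = j then 1 else 0) := by
    intro l
    rw [cartan_mulVec hn]
    set t := (l - i).val with ht
    have htlt : t < n + 1 := ZMod.val_lt _
    have hv1 : (l + 1 - i).val = (t + 1) % (n + 1) := by
      have h : l + 1 - i = (l - i) + 1 := by ring
      rw [h, ZMod.val_add, ZMod.val_one]
    have hv2 : (l - 1 - i).val = (t + n) % (n + 1) := by
      have h : l - 1 - i = (l - i) + ((n : ℕ) : ZMod (n + 1)) := by
        rw [← hneg1]; ring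
      rw [h, ZMod.val_add, hnval]
    have heqi : (l = i) = (t = 0) := by
      rw [ht]
      simp only [eq_iff_iff]
      rw [ZMod.val_eq_zero, sub_eq_zero]
    have heqj : (l = j) = (t = d) := by
      simp only [eq_iff_iff]
      constructor
      · intro h
        rw [ht, h, hj, show i + (d : ZMod (n+1)) - i = (d : ZMod (n+1)) by ring, hdval]
      · intro h
        have hh : l - i = (d : ZMod (n + 1)) := by
          apply ZMod.val_injective
          rw [← ht, h, hdval]
        rw [hj, ← hh]; ring
    rw [hχval l, hχval (l + 1), hχval (l - 1), hv1, hv2, ← ht]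
    simp only [heqi, heqj]
    exact arcArith n d t hn hd2 hdn htlt
  apply hno
  refine ⟨x + χ, ?_, ?_, ?_⟩
  · intro l
    rw [vA_add]
    have hk := key l
    have hxl := hx l
    by_cases e1 : l = i
    · rw [e1] at hk ⊢
      rw [if_pos rfl, if_neg (Ne.symm hij)] at hk
      linarith
    · by_cases e2 : l = j
      · rw [e2] at hk ⊢
        rw [if_neg hij, if_pos rfl] at hk
        linarith
      · rw [if_neg e1, if_neg e2] at hk
        linarith
  · rw [Pi.lt_def]
    constructor
    · intro l
      simp only [Pi.add_apply, hχval l]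
      split_ifs <;> linarith
    · refine ⟨i + 1, ?_⟩
      have hval1 : (i + 1 - i).val = 1 := by
        rw [show i + 1 - i = (1 : ZMod (n+1)) by ring, ZMod.val_one]
      have hc : χ (i + 1) = 1 := by
        rw [hχval, hval1, if_pos ⟨le_refl 1, by omega⟩]
      simp only [Pi.add_apply, hc]
      linarith
  · rw [Pi.lt_def]
    constructor
    · intro l
      simp only [Pi.add_apply, Pi.one_apply, hχval l]
      split_ifs <;> linarith
    · refine ⟨i, ?_⟩
      have hc : χ i = 0 := by
        rw [hχval, show i - i = (0 : ZMod (n+1)) by ring, ZMod.val_zero,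
          if_neg (by omega)]
      simp only [Pi.add_apply, Pi.one_apply, hc]
      linarith

/-- No dominant `z` strictly between `x` and `x + 1` forces `v_i ≤ 1`. -/
lemma no_big (hn : 2 ≤ n) (m : ℤ) (x : ZMod (n + 1) → ℤ) (hx : DomA n m x)
    (hno : ¬∃ z, DomA n m z ∧ x < z ∧ z < x + 1)
    (i : ZMod (n + 1)) (hvi : 2 ≤ vA n m x i) : False := by
  set ψ : ZMod (n + 1) → ℤ := fun l => if l = i then 0 else 1 with hψ
  have hψval : ∀ l, ψ l = if l = i then 0 else 1 := fun l => rfl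
  have h1 : ∀ l : ZMod (n + 1), l + 1 ≠ l := by
    intro l h; exact myOneNeZero hn (by linear_combination h)
  have h2 : ∀ l : ZMod (n + 1), l - 1 ≠ l := by
    intro l h; exact myOneNeZero hn (by linear_combination -h)
  apply hno
  refine ⟨x + ψ, ?_, ?_, ?_⟩
  · intro l
    rw [vA_add, cartan_mulVec hn]
    have hxl := hx l
    by_cases e1 : l = i
    · have a1 : ψ l = 0 := by rw [hψval, if_pos e1]
      have a2 : ψ (l + 1) = 1 := by rw [hψval, if_neg (e1 ▸ h1 l)]
      have a3 : ψ (l - 1) = 1 := by rw [hψval, if_neg (e1 ▸ h2 l)]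
      rw [a1, a2, a3, e1]
      linarith
    · have a1 : ψ l = 1 := by rw [hψval, if_neg e1]
      have a2 : (0:ℤ) ≤ ψ (l + 1) ∧ ψ (l + 1) ≤ 1 := by
        rw [hψval]; split_ifs <;> norm_num
      have a3 : (0:ℤ) ≤ ψ (l - 1) ∧ ψ (l - 1) ≤ 1 := by
        rw [hψval]; split_ifs <;> norm_num
      rw [a1]
      linarith [a2.2, a3.2]
  · rw [Pi.lt_def]
    constructor
    · intro l
      simp only [Pi.add_apply, hψval l]
      split_ifs <;> linarith
    · refine ⟨i + 1, ?_⟩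
      have hc : ψ (i + 1) = 1 := by rw [hψval, if_neg (h1 i)]
      simp only [Pi.add_apply, hc]
      linarith
  · rw [Pi.lt_def]
    constructor
    · intro l
      simp only [Pi.add_apply, Pi.one_apply, hψval l]
      split_ifs <;> linarith
    · refine ⟨i, ?_⟩
      have hc : ψ i = 0 := by rw [hψval, if_pos rfl]
      simp only [Pi.add_apply, Pi.one_apply, hc]
      linarith

end Aux

/-- If `x` is dominant and `x + 𝟙` covers `x` (the weight `μ + δ`
covers `μ`), then `m = 1` and `v(x) = eᵢ` for some `i`, i.e. the weight is a
fundamental weight up to adding a multiple of `δ`. -/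
theorem stmt_10 (n : ℕ) (hn : 2 ≤ n) (m : ℤ) (hm : 1 ≤ m)
    (x : ZMod (n + 1) → ℤ) (hx : DomA n m x)
    (hcov : CoversA n m x (x + 1)) :
    m = 1 ∧ ∃ i, vA n m x = eA n i := by
  obtain ⟨-, -, -, hno⟩ := hcov
  have hsum : ∑ l, vA n m x l = m := sum_vA hn m x
  -- there is a positive entry
  have hex : ∃ i, 1 ≤ vA n m x i := by
    by_contra h
    push_neg at h
    have hz : ∀ l, vA n m x l = 0 := fun l => le_antisymm (by linarith [h l]) (hx l)
    rw [Finset.sum_congr rfl fun l _ => hz l] at hsum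
    simp at hsum
    omega
  obtain ⟨i, hvi⟩ := hex
  -- no other positive entry
  have hzero : ∀ j, j ≠ i → vA n m x j = 0 := by
    intro j hji
    by_contra h
    have hvj : 1 ≤ vA n m x j := by
      rcases lt_or_eq_of_le (hx j) with h' | h'
      · omega
      · exact absurd h'.symm h
    have hd0 : (j - i) ≠ 0 := fun h' => hji (by linear_combination h')
    set d := (j - i).val with hd
    have hd1 : d ≠ 0 := fun h' => hd0 ((ZMod.val_eq_zero _).mp (by rw [← hd]; exact h'))
    have hdn : d ≤ n := by have := ZMod.val_lt (j - i); omega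
    have hcast : i + ((d : ℕ) : ZMod (n + 1)) = j := by
      rw [hd, ZMod.natCast_rightInverse (j - i)]; ring
    rcases Nat.lt_or_ge d 2 with hdlt | hdge
    · -- d = 1 : use the other direction, from j to i, with distance n + 1 - d
      haveI : NeZero (j - i) := ⟨hd0⟩
      have hvneg : (i - j).val = n + 1 - d := by
        have h' : i - j = -(j - i) := by ring
        rw [h', ZMod.val_neg_of_ne_zero]
      have hcast2 : j + (((n + 1 - d : ℕ)) : ZMod (n + 1)) = i := by
        rw [← hvneg, ZMod.natCast_rightInverse (i - j)]; ring
      apply no_two hn m x hx hno j (n + 1 - d) (by omega) (by omega) hvj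
      rw [hcast2]; exact hvi
    · apply no_two hn m x hx hno i d hdge hdn hvi
      rw [hcast]; exact hvj
  -- v i = m
  have hvim : vA n m x i = m := by
    have h' : ∑ l, vA n m x l = vA n m x i :=
      Finset.sum_eq_single i (fun j _ hj => hzero j hj)
        (fun h => absurd (Finset.mem_univ i) h)
    rw [← h', hsum]
  -- m = 1
  have hm1 : m = 1 := by
    by_contra h
    exact no_big hn m x hx hno i (by omega)
  refine ⟨hm1, i, ?_⟩
  funext j
  by_cases hj : j = i
  · rw [hj, hvim, hm1, eA, if_pos rfl]
  · rw [hzero j hj, eA, if_neg hj]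
end

section
/- Let y be dominant, let K = {i} be a singleton and K' an arc with at least two elements such that i ∉ K', K ∪ K' ≠ ℤ/(n+1)ℤ, and K ∪ K' induces a connected subgraph of the (n+1)-cycle; let i₁ be the unique element of K' adjacent to i. Suppose x := y − e_i and x' := y − χ_{K'} are dominant and y covers both x and x'. Then the interval of dominant vectors between the componentwise minimum of x and x' and y is a pentagon with exactly five elements: {z ∈ ℤ^{n+1} : z dominant and y − e_i − χ_{K'} ≤ z ≤ y} = {y, y − e_i, y − χ_{K'}, y − e_i − e_{i₁}, y − e_i − χ_{K'}}. -/
section AuxLemmas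

lemma aux_one_ne (n : ℕ) (hn : 2 ≤ n) : (1 : ZMod (n+1)) ≠ 0 := by
  have : ((1:ℕ) : ZMod (n+1)) ≠ 0 := by
    rw [Ne, ZMod.natCast_eq_zero_iff]
    intro h; have := Nat.le_of_dvd one_pos h; omega
  simpa using this

lemma aux_two_ne (n : ℕ) (hn : 2 ≤ n) : (2 : ZMod (n+1)) ≠ 0 := by
  have : ((2:ℕ) : ZMod (n+1)) ≠ 0 := by
    rw [Ne, ZMod.natCast_eq_zero_iff]
    intro h; have := Nat.le_of_dvd two_pos h; omega
  simpa using this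

lemma aux_mulVec (n : ℕ) (hn : 2 ≤ n) (x : ZMod (n+1) → ℤ) (j : ZMod (n+1)) :
    (cartanA n).mulVec x j = 2 * x j - x (j+1) - x (j-1) := by
  have h10 := aux_one_ne n hn
  have h20 := aux_two_ne n hn
  have h1 : j + 1 ≠ j := fun h => h10 (by linear_combination h)
  have h2 : j - 1 ≠ j := fun h => h10 (by linear_combination -h)
  have h3 : j + 1 ≠ j - 1 := fun h => h20 (by linear_combination h)
  have key : ∀ k, cartanA n j k * x k =
      (if k = j then 2 * x k else 0) +
      ((if k = j + 1 then -x k else 0) + (if k = j - 1 then -x k else 0)) := by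
    intro k
    simp only [cartanA, Matrix.of_apply]
    by_cases hk : k = j
    · subst hk
      rw [if_pos rfl, if_pos rfl, if_neg (Ne.symm h1), if_neg (Ne.symm h2)]
      ring
    · rw [if_neg (Ne.symm hk), if_neg hk]
      by_cases hk1 : k = j + 1
      · subst hk1
        rw [if_pos (Or.inl rfl), if_pos rfl, if_neg h3]
        ring
      · rw [if_neg hk1]
        by_cases hk2 : k = j - 1
        · subst hk2
          rw [if_pos (Or.inr rfl), if_pos rfl]
          ring
        · rw [if_neg (by tauto), if_neg hk2]
          ring
  show (∑ k, cartanA n j k * x k) = _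
  rw [Finset.sum_congr rfl fun k _ => key k, Finset.sum_add_distrib, Finset.sum_add_distrib,
    Finset.sum_ite_eq' Finset.univ j (fun k => 2 * x k),
    Finset.sum_ite_eq' Finset.univ (j+1) (fun k => -x k),
    Finset.sum_ite_eq' Finset.univ (j-1) (fun k => -x k)]
  simp only [Finset.mem_univ, if_pos]
  ring

lemma aux_vA_sub (n : ℕ) (hn : 2 ≤ n) (m : ℤ) (y c : ZMod (n+1) → ℤ) (j : ZMod (n+1)) :
    vA n m (y - c) j = vA n m y j - (2 * c j - c (j+1) - c (j-1)) := by
  unfold vA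
  rw [Matrix.mulVec_sub, Pi.sub_apply, aux_mulVec n hn c j]
  ring

end AuxLemmas
/-- pentagon basic cells: let `y` be dominant covering both
`x = y - eᵢ` and `x' = y - χ_{K'}`, where `K = {i}` is a singleton, `K'` is an arc
with at least two elements, `i ∉ K'`, `{i} ∪ K'` is proper and induces a connected
subgraph, and `i₁` is the unique element of `K'` adjacent to `i`. Then the interval
of dominant vectors `[x ⊓ x', y]` is a pentagon with exactly five elements. -/
theorem stmt_14 (n : ℕ) (hn : 2 ≤ n) (m : ℤ) (hm : 1 ≤ m)
    (y : ZMod (n + 1) → ℤ) (hy : DomA n m y)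
    (i : ZMod (n + 1)) (K' : Set (ZMod (n + 1)))
    (hK' : IsArc n K') (hK'2 : K'.Nontrivial) (hiK' : i ∉ K')
    (hproper : insert i K' ≠ Set.univ)
    (hconn : ((cycleG n).induce (insert i K')).Connected)
    (i₁ : ZMod (n + 1)) (hi₁ : i₁ ∈ K' ∧ (cycleG n).Adj i i₁ ∧
      ∀ j ∈ K', (cycleG n).Adj i j → j = i₁)
    (hcovK : CoversA n m (y - eA n i) y) (hcovK' : CoversA n m (y - chi n K') y) :
    {z | DomA n m z ∧ y - eA n i - chi n K' ≤ z ∧ z ≤ y} =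
      {y, y - eA n i, y - chi n K', y - eA n i - eA n i₁, y - eA n i - chi n K'} ∧
    {z | DomA n m z ∧ y - eA n i - chi n K' ≤ z ∧ z ≤ y}.ncard = 5 := by
  classical
  obtain ⟨hi₁K, hadj, huniq⟩ := hi₁
  have h10 := aux_one_ne n hn
  have h20 := aux_two_ne n hn
  -- basic values of eA and chi
  have heii : ∀ l : ZMod (n+1), eA n l l = 1 := fun l => if_pos rfl
  have hei : ∀ k l : ZMod (n+1), k ≠ l → eA n l k = 0 := fun k l h => if_neg h
  have henn : ∀ l k : ZMod (n+1), 0 ≤ eA n l k := by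
    intro l k; unfold eA; split <;> norm_num
  have heub : ∀ l k : ZMod (n+1), eA n l k ≤ 1 := by
    intro l k; unfold eA; split <;> norm_num
  have hchi : ∀ k, chi n K' k = if k ∈ K' then 1 else 0 := by
    intro k; simp [chi, Set.indicator_apply]
  have hχnn : ∀ k, 0 ≤ chi n K' k := by
    intro k; rw [hchi]; split <;> norm_num
  have hχub : ∀ k, chi n K' k ≤ 1 := by
    intro k; rw [hchi]; split <;> norm_num
  have hχmem : ∀ k, k ∈ K' → chi n K' k = 1 := fun k h => by rw [hchi, if_pos h]
  have hχnmem : ∀ k, k ∉ K' → chi n K' k = 0 := fun k h => by rw [hchi, if_neg h]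
  have hχi : chi n K' i = 0 := hχnmem i hiK'
  have hχi₁ : chi n K' i₁ = 1 := hχmem i₁ hi₁K
  -- neighbours of i and i₁
  have hadj' : i₁ = i + 1 ∨ i₁ = i - 1 := by
    rw [cycleG, SimpleGraph.fromRel_adj] at hadj
    rcases hadj.2 with h | h
    · exact Or.inl h
    · exact Or.inr (by linear_combination -h)
  obtain ⟨i₀, i₁', hcase⟩ : ∃ i₀ i₁' : ZMod (n+1),
      (i₁ = i + 1 ∧ i₀ = i - 1 ∧ i₁' = i + 2) ∨ (i₁ = i - 1 ∧ i₀ = i + 1 ∧ i₁' = i - 2) := by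
    rcases hadj' with h | h
    · exact ⟨i - 1, i + 2, Or.inl ⟨h, rfl, rfl⟩⟩
    · exact ⟨i + 1, i - 2, Or.inr ⟨h, rfl, rfl⟩⟩
  have hne_ii₁ : i ≠ i₁ := by
    rcases hcase with ⟨h1, _, _⟩ | ⟨h1, _, _⟩
    · exact fun h => h10 (by linear_combination -h1 - h)
    · exact fun h => h10 (by linear_combination h1 + h)
  have hne_ii₀ : i ≠ i₀ := by
    rcases hcase with ⟨_, h2, _⟩ | ⟨_, h2, _⟩
    · exact fun h => h10 (by linear_combination h + h2)
    · exact fun h => h10 (by linear_combination -h - h2)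
  have hne_i₁i₀ : i₁ ≠ i₀ := by
    rcases hcase with ⟨h1, h2, _⟩ | ⟨h1, h2, _⟩
    · exact fun h => h20 (by linear_combination -h1 + h2 + h)
    · exact fun h => h20 (by linear_combination h1 - h2 - h)
  have hne_i₁i₁' : i₁ ≠ i₁' := by
    rcases hcase with ⟨h1, _, h3⟩ | ⟨h1, _, h3⟩
    · exact fun h => h10 (by linear_combination h1 - h3 - h)
    · exact fun h => h10 (by linear_combination h3 - h1 + h)
  have hne_ii₁' : i ≠ i₁' := by
    rcases hcase with ⟨_, _, h3⟩ | ⟨_, _, h3⟩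
    · exact fun h => h20 (by linear_combination -h3 - h)
    · exact fun h => h20 (by linear_combination h3 + h)
  have hp0 : (i + 1 = i₁ ∧ i - 1 = i₀) ∨ (i + 1 = i₀ ∧ i - 1 = i₁) := by
    rcases hcase with ⟨h1, h2, _⟩ | ⟨h1, h2, _⟩
    · exact Or.inl ⟨by linear_combination -h1, by linear_combination -h2⟩
    · exact Or.inr ⟨by linear_combination -h2, by linear_combination -h1⟩
  have hp1 : (i₁ + 1 = i₁' ∧ i₁ - 1 = i) ∨ (i₁ + 1 = i ∧ i₁ - 1 = i₁') := by
    rcases hcase with ⟨h1, _, h3⟩ | ⟨h1, _, h3⟩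
    · exact Or.inl ⟨by linear_combination h1 - h3, by linear_combination h1⟩
    · exact Or.inr ⟨by linear_combination h1, by linear_combination h1 - h3⟩
  have hsum_i : ∀ d : ZMod (n+1) → ℤ, d (i+1) + d (i-1) = d i₁ + d i₀ := by
    intro d
    rcases hp0 with ⟨e1, e2⟩ | ⟨e1, e2⟩ <;> rw [e1, e2] <;> ring
  have hsum_i₁ : ∀ d : ZMod (n+1) → ℤ, d (i₁+1) + d (i₁-1) = d i + d i₁' := by
    intro d
    rcases hp1 with ⟨e1, e2⟩ | ⟨e1, e2⟩ <;> rw [e1, e2] <;> ring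
  have hnbr_i : ∀ j : ZMod (n+1), (j + 1 = i ∨ j - 1 = i) → (j = i₁ ∨ j = i₀) := by
    intro j h
    rcases h with h | h
    · have hj : j = i - 1 := by linear_combination h
      rcases hp0 with ⟨_, e2⟩ | ⟨_, e2⟩
      · exact Or.inr (hj.trans e2)
      · exact Or.inl (hj.trans e2)
    · have hj : j = i + 1 := by linear_combination h
      rcases hp0 with ⟨e1, _⟩ | ⟨e1, _⟩
      · exact Or.inl (hj.trans e1)
      · exact Or.inr (hj.trans e1)
  have hnbr_i₁ : ∀ j : ZMod (n+1), (j + 1 = i₁ ∨ j - 1 = i₁) → (j = i ∨ j = i₁') := by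
    intro j h
    rcases h with h | h
    · have hj : j = i₁ - 1 := by linear_combination h
      rcases hp1 with ⟨_, e2⟩ | ⟨_, e2⟩
      · exact Or.inl (hj.trans e2)
      · exact Or.inr (hj.trans e2)
    · have hj : j = i₁ + 1 := by linear_combination h
      rcases hp1 with ⟨e1, _⟩ | ⟨e1, _⟩
      · exact Or.inr (hj.trans e1)
      · exact Or.inl (hj.trans e1)
  have hi₀K : i₀ ∉ K' := by
    intro hmem
    have hadj0 : (cycleG n).Adj i i₀ := by
      rw [cycleG, SimpleGraph.fromRel_adj]
      refine ⟨hne_ii₀, ?_⟩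
      rcases hp0 with ⟨_, e2⟩ | ⟨e1, _⟩
      · right; linear_combination e2
      · left; exact e1.symm
    exact hne_i₁i₀ ((huniq i₀ hmem hadj0).symm)
  have hχi₀ : chi n K' i₀ = 0 := hχnmem i₀ hi₀K
  -- key inequalities on vA y
  have hwi : 2 ≤ vA n m y i := by
    have h := hcovK.1 i
    rw [aux_vA_sub n hn, heii i,
      hei (i+1) i (fun h => h10 (by linear_combination h)),
      hei (i-1) i (fun h => h10 (by linear_combination -h))] at h
    linarith
  have hwi₁ : 1 ≤ vA n m y i₁ := by
    have h := hcovK'.1 i₁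
    rw [aux_vA_sub n hn] at h
    have hs := hsum_i₁ (chi n K')
    have h3 := hχub i₁'
    rw [hχi] at hs
    rw [hχi₁] at h
    linarith
  -- dominant vectors strictly inside (y - χ, y) do not exist
  have hexcl : ∀ d : ZMod (n+1) → ℤ, (∀ k, 0 ≤ d k) → d ≠ 0 → d ≤ chi n K' →
      d ≠ chi n K' → ∃ j, vA n m (y - d) j < 0 := by
    intro d h0 hne hle hneK
    by_contra hcon
    push_neg at hcon
    apply hcovK'.2.2.2
    refine ⟨y - d, hcon, ?_, ?_⟩
    · exact sub_lt_sub_left (lt_of_le_of_ne hle hneK) y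
    · have hlt : (0 : ZMod (n+1) → ℤ) < d :=
        lt_of_le_of_ne (fun k => h0 k) (Ne.symm hne)
      simpa using sub_lt_sub_left hlt y
  -- dominance of the two new vertices
  have hdom4 : DomA n m (y - (eA n i + eA n i₁)) := by
    intro j
    rw [aux_vA_sub n hn]
    have hs := hsum_i (eA n i + eA n i₁)
    have hs' := hsum_i₁ (eA n i + eA n i₁)
    have e1 : (eA n i + eA n i₁) i = 1 := by
      simp only [Pi.add_apply]; rw [heii i, hei i i₁ hne_ii₁]; norm_num
    have e2 : (eA n i + eA n i₁) i₁ = 1 := by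
      simp only [Pi.add_apply]; rw [heii i₁, hei i₁ i hne_ii₁.symm]; norm_num
    have e3 : (eA n i + eA n i₁) i₀ = 0 := by
      simp only [Pi.add_apply]; rw [hei i₀ i hne_ii₀.symm, hei i₀ i₁ hne_i₁i₀.symm]
      norm_num
    have e4 : (eA n i + eA n i₁) i₁' = 0 := by
      simp only [Pi.add_apply]; rw [hei i₁' i hne_ii₁'.symm, hei i₁' i₁ hne_i₁i₁'.symm]
      norm_num
    by_cases hji : j = i
    · rw [hji, e1]
      rw [e2, e3] at hs
      linarith
    · by_cases hji₁ : j = i₁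
      · rw [hji₁, e2]
        rw [e1, e4] at hs'
        linarith
      · have e5 : (eA n i + eA n i₁) j = 0 := by
          simp only [Pi.add_apply]; rw [hei j i hji, hei j i₁ hji₁]; norm_num
        have p1 : 0 ≤ (eA n i + eA n i₁) (j+1) := by
          simp only [Pi.add_apply]; exact add_nonneg (henn _ _) (henn _ _)
        have p2 : 0 ≤ (eA n i + eA n i₁) (j-1) := by
          simp only [Pi.add_apply]; exact add_nonneg (henn _ _) (henn _ _)
        have := hy j
        rw [e5]
        linarith
  have hdom5 : DomA n m (y - (eA n i + chi n K')) := by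
    intro j
    rw [aux_vA_sub n hn]
    by_cases hji : j = i
    · have hs := hsum_i (eA n i + chi n K')
      have e1 : (eA n i + chi n K') i = 1 := by
        simp only [Pi.add_apply]; rw [heii i, hχi]; norm_num
      have e2 : (eA n i + chi n K') i₁ = 1 := by
        simp only [Pi.add_apply]; rw [hei i₁ i hne_ii₁.symm, hχi₁]; norm_num
      have e3 : (eA n i + chi n K') i₀ = 0 := by
        simp only [Pi.add_apply]; rw [hei i₀ i hne_ii₀.symm, hχi₀]; norm_num
      rw [hji, e1]
      rw [e2, e3] at hs
      linarith
    · have h := hcovK'.1 j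
      rw [aux_vA_sub n hn] at h
      have e1 : (eA n i + chi n K') j = eA n i j + chi n K' j := rfl
      have e2 : (eA n i + chi n K') (j+1) = eA n i (j+1) + chi n K' (j+1) := rfl
      have e3 : (eA n i + chi n K') (j-1) = eA n i (j-1) + chi n K' (j-1) := rfl
      have e4 : eA n i j = 0 := hei j i hji
      have p1 := henn i (j+1)
      have p2 := henn i (j-1)
      rw [e1, e2, e3, e4]
      linarith
  -- the set equality
  have hmain : {z | DomA n m z ∧ y - eA n i - chi n K' ≤ z ∧ z ≤ y} =
      ({y, y - eA n i, y - chi n K', y - eA n i - eA n i₁, y - eA n i - chi n K'} :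
        Set (ZMod (n+1) → ℤ)) := by
    have hχnn' : (0 : ZMod (n+1) → ℤ) ≤ chi n K' := fun k => hχnn k
    have henn' : (0 : ZMod (n+1) → ℤ) ≤ eA n i := fun k => henn i k
    have he₁nn' : (0 : ZMod (n+1) → ℤ) ≤ eA n i₁ := fun k => henn i₁ k
    have he₁χ : eA n i₁ ≤ chi n K' := by
      intro k
      by_cases hk : k = i₁
      · subst hk; rw [heii, hχi₁]
      · rw [hei k i₁ hk]; exact hχnn k
    ext z
    simp only [Set.mem_setOf_eq, Set.mem_insert_iff, Set.mem_singleton_iff]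
    constructor
    · rintro ⟨hzdom, hzl, hzu⟩
      set c : ZMod (n+1) → ℤ := y - z with hcdef
      have hzc : z = y - c := (sub_sub_cancel y z).symm
      rw [hzc] at hzdom
      have hc_nn : ∀ k, 0 ≤ c k := fun k => by
        have := hzu k
        simp only [hcdef, Pi.sub_apply]
        linarith
      have hc_ub : ∀ k, c k ≤ eA n i k + chi n K' k := fun k => by
        have := hzl k
        simp only [Pi.sub_apply] at this
        simp only [hcdef, Pi.sub_apply]
        linarith
      have hc01 : ∀ k, c k = 0 ∨ c k = 1 := by
        intro k
        have h1 := hc_nn k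
        have h2 := hc_ub k
        have h3 : eA n i k + chi n K' k ≤ 1 := by
          by_cases hk : k = i
          · rw [hk, heii, hχi]; norm_num
          · rw [hei k i hk]; simpa using hχub k
        omega
      have hc_out : ∀ k, k ≠ i → k ∉ K' → c k = 0 := by
        intro k h1 h2
        have := hc_ub k
        rw [hei k i h1, hχnmem k h2] at this
        have := hc_nn k
        omega
      have hci₀0 : c i₀ = 0 := hc_out i₀ hne_ii₀.symm hi₀K
      suffices hcs : c = 0 ∨ c = eA n i ∨ c = chi n K' ∨ c = eA n i + eA n i₁ ∨
          c = eA n i + chi n K' by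
        rcases hcs with h | h | h | h | h
        · left; rw [hzc, h, sub_zero]
        · right; left; rw [hzc, h]
        · right; right; left; rw [hzc, h]
        · right; right; right; left; rw [hzc, h, sub_add_eq_sub_sub]
        · right; right; right; right; rw [hzc, h, sub_add_eq_sub_sub]
      by_cases hci : c i = 0
      · -- c supported inside K'
        have hcle : c ≤ chi n K' := by
          intro k
          by_cases hk : k = i
          · rw [hk, hci]; exact hχnn i
          · have := hc_ub k; rw [hei k i hk] at this; linarith
        by_cases hc0 : c = 0
        · exact Or.inl hc0
        by_cases hcχ : c = chi n K'
        · exact Or.inr (Or.inr (Or.inl hcχ))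
        exfalso
        apply hcovK'.2.2.2
        refine ⟨z, ?_, ?_, ?_⟩
        · rw [hzc]; exact hzdom
        · rw [hzc]; exact sub_lt_sub_left (lt_of_le_of_ne hcle hcχ) y
        · rw [hzc]
          have hlt : (0 : ZMod (n+1) → ℤ) < c :=
            lt_of_le_of_ne (fun k => hc_nn k) (Ne.symm hc0)
          simpa using sub_lt_sub_left hlt y
      · have hci1 : c i = 1 := (hc01 i).resolve_left hci
        by_cases hce : c = eA n i
        · exact Or.inr (Or.inl hce)
        by_cases hcee : c = eA n i + eA n i₁
        · exact Or.inr (Or.inr (Or.inr (Or.inl hcee)))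
        by_cases hceχ : c = eA n i + chi n K'
        · exact Or.inr (Or.inr (Or.inr (Or.inr hceχ)))
        exfalso
        -- first exclusion: d₁ = c - eA n i
        have hd₁nn : ∀ k, 0 ≤ c k - eA n i k := by
          intro k
          by_cases hk : k = i
          · rw [hk, hci1, heii]; norm_num
          · rw [hei k i hk]; simpa using hc_nn k
        have hd₁le : ∀ k, c k - eA n i k ≤ chi n K' k := by
          intro k
          by_cases hk : k = i
          · rw [hk, hci1, heii, hχi]; norm_num
          · rw [hei k i hk]
            have := hc_ub k; rw [hei k i hk] at this; linarith
        have hd₁0 : c - eA n i ≠ 0 := fun h => hce (sub_eq_zero.mp h)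
        have hd₁χ : c - eA n i ≠ chi n K' := by
          intro h
          apply hceχ
          have h2 := sub_eq_iff_eq_add.mp h
          exact h2.trans (add_comm _ _)
        obtain ⟨j, hj⟩ := hexcl (c - eA n i)
          (fun k => by simpa [Pi.sub_apply] using hd₁nn k) hd₁0
          (fun k => by simpa [Pi.sub_apply] using hd₁le k) hd₁χ
        rw [aux_vA_sub n hn] at hj
        simp only [Pi.sub_apply] at hj
        have hzdj := hzdom j
        rw [aux_vA_sub n hn] at hzdj
        have hBe : 2 * eA n i j - eA n i (j+1) - eA n i (j-1) < 0 := by linarith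
        have hj01 : j = i₁ ∨ j = i₀ := by
          by_cases h1 : j + 1 = i
          · exact hnbr_i j (Or.inl h1)
          by_cases h2 : j - 1 = i
          · exact hnbr_i j (Or.inr h2)
          exfalso
          rw [hei (j+1) i h1, hei (j-1) i h2] at hBe
          have := henn i j
          linarith
      -- case j = i₁ or j = i₀
        have hci₁1 : c i₁ = 1 ∧ c i₁' = 0 := by
          rcases hj01 with hj01 | hj01
          · -- j = i₁
            rw [hj01] at hj
            have hsc := hsum_i₁ c
            have hse := hsum_i₁ (eA n i)
            rw [heii i, hei i₁' i hne_ii₁'.symm] at hse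
            rw [hei i₁ i hne_ii₁.symm] at hj
            have hb1 := hc01 i₁
            have hb2 := hc_nn i₁'
            constructor
            · rcases hb1 with h | h
              · exfalso; rw [h] at hj; linarith
              · exact h
            · rcases hb1 with h | h
              · exfalso; rw [h] at hj; linarith
              · rw [h] at hj
                have hb3 := hc01 i₁'
                rcases hb3 with h' | h'
                · exact h'
                · exfalso; linarith
          · -- j = i₀ : impossible
            exfalso
            rw [hj01] at hj
            rw [hci₀0, hei i₀ i hne_ii₀.symm] at hj
            have p1 := hd₁nn (i₀+1)
            have p2 := hd₁nn (i₀-1)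
            have := hy i₀
            linarith
        obtain ⟨hci₁1, hci₁'0⟩ := hci₁1
        -- find the extra support point
        have hk₀ : ∃ k, c k = 1 ∧ k ≠ i ∧ k ≠ i₁ := by
          by_contra h
          push_neg at h
          apply hcee
          funext k
          by_cases hk : k = i
          · simp only [Pi.add_apply]
            rw [hk, hci1, heii, hei i i₁ hne_ii₁]
            norm_num
          by_cases hk1 : k = i₁
          · simp only [Pi.add_apply]
            rw [hk1, hci₁1, heii, hei i₁ i hne_ii₁.symm]
            norm_num
          · simp only [Pi.add_apply]
            rw [hei k i hk, hei k i₁ hk1]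
            rcases hc01 k with h0 | h1
            · rw [h0]; norm_num
            · exact absurd (h k h1 hk) hk1
        obtain ⟨k₀, hk₀1, hk₀i, hk₀i₁⟩ := hk₀
        -- second exclusion: d₂ = c - eA n i - eA n i₁
        have hd₂nn : ∀ k, 0 ≤ c k - eA n i k - eA n i₁ k := by
          intro k
          by_cases hk : k = i
          · rw [hk, hci1, heii, hei i i₁ hne_ii₁]; norm_num
          by_cases hk1 : k = i₁
          · rw [hk1, hci₁1, heii, hei i₁ i hne_ii₁.symm]; norm_num
          · rw [hei k i hk, hei k i₁ hk1]
            have := hc_nn k; linarith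
        have hd₂le : ∀ k, c k - eA n i k - eA n i₁ k ≤ chi n K' k := by
          intro k
          by_cases hk : k = i
          · rw [hk, hci1, heii, hei i i₁ hne_ii₁, hχi]; norm_num
          by_cases hk1 : k = i₁
          · rw [hk1, hci₁1, heii, hei i₁ i hne_ii₁.symm, hχi₁]; norm_num
          · rw [hei k i hk, hei k i₁ hk1]
            have := hc_ub k; rw [hei k i hk] at this; linarith
        have hd₂0 : c - eA n i - eA n i₁ ≠ 0 := by
          intro h
          have := congrFun h k₀
          simp only [Pi.sub_apply, Pi.zero_apply] at this
          rw [hk₀1, hei k₀ i hk₀i, hei k₀ i₁ hk₀i₁] at this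
          norm_num at this
        have hd₂χ : c - eA n i - eA n i₁ ≠ chi n K' := by
          intro h
          have := congrFun h i₁
          simp only [Pi.sub_apply] at this
          rw [hci₁1, heii, hei i₁ i hne_ii₁.symm, hχi₁] at this
          norm_num at this
        obtain ⟨j', hj'⟩ := hexcl (c - eA n i - eA n i₁)
          (fun k => by simpa [Pi.sub_apply] using hd₂nn k) hd₂0
          (fun k => by simpa [Pi.sub_apply] using hd₂le k) hd₂χ
        rw [aux_vA_sub n hn] at hj'
        simp only [Pi.sub_apply] at hj'
        have hzdj' := hzdom j'
        rw [aux_vA_sub n hn] at hzdj'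
        have hd2pos : 1 ≤ c j' - eA n i j' - eA n i₁ j' := by
          by_contra hlt
          push_neg at hlt
          have h0 : c j' - eA n i j' - eA n i₁ j' = 0 := le_antisymm (by omega) (hd₂nn j')
          have p1 := hd₂nn (j'+1)
          have p2 := hd₂nn (j'-1)
          have := hy j'
          linarith
        have hj'i : j' ≠ i := by
          intro h
          rw [h, hci1, heii, hei i i₁ hne_ii₁] at hd2pos
          norm_num at hd2pos
        have hj'i₁ : j' ≠ i₁ := by
          intro h
          rw [h, hci₁1, heii, hei i₁ i hne_ii₁.symm] at hd2pos
          norm_num at hd2pos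
        have hcj'1 : c j' = 1 := by
          rw [hei j' i hj'i, hei j' i₁ hj'i₁] at hd2pos
          rcases hc01 j' with h | h
          · rw [h] at hd2pos; norm_num at hd2pos
          · exact h
        have hj'i₀ : j' ≠ i₀ := by
          intro h; rw [h, hci₀0] at hcj'1; norm_num at hcj'1
        have hj'i₁' : j' ≠ i₁' := by
          intro h; rw [h, hci₁'0] at hcj'1; norm_num at hcj'1
        -- all the eA values around j' vanish
        have z1 : eA n i j' = 0 := hei j' i hj'i
        have z2 : eA n i (j'+1) = 0 := by
          apply hei
          intro h
          rcases hnbr_i j' (Or.inl h) with h' | h'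
          · exact hj'i₁ h'
          · exact hj'i₀ h'
        have z3 : eA n i (j'-1) = 0 := by
          apply hei
          intro h
          rcases hnbr_i j' (Or.inr h) with h' | h'
          · exact hj'i₁ h'
          · exact hj'i₀ h'
        have z4 : eA n i₁ j' = 0 := hei j' i₁ hj'i₁
        have z5 : eA n i₁ (j'+1) = 0 := by
          apply hei
          intro h
          rcases hnbr_i₁ j' (Or.inl h) with h' | h'
          · exact hj'i h'
          · exact hj'i₁' h'
        have z6 : eA n i₁ (j'-1) = 0 := by
          apply hei
          intro h
          rcases hnbr_i₁ j' (Or.inr h) with h' | h'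
          · exact hj'i h'
          · exact hj'i₁' h'
        rw [z1, z2, z3, z4, z5, z6] at hj'
        linarith
    · have hd4 : DomA n m (y - eA n i - eA n i₁) := by
        rw [sub_sub]; exact hdom4
      have hd5 : DomA n m (y - eA n i - chi n K') := by
        rw [sub_sub]; exact hdom5
      rintro (rfl | rfl | rfl | rfl | rfl)
      · exact ⟨hy, (sub_le_self _ hχnn').trans (sub_le_self _ henn'), le_refl _⟩
      · exact ⟨hcovK.1, sub_le_self _ hχnn', sub_le_self _ henn'⟩
      · exact ⟨hcovK'.1, sub_le_sub_right (sub_le_self _ henn') _,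
          sub_le_self _ hχnn'⟩
      · exact ⟨hd4, sub_le_sub_left he₁χ _,
          (sub_le_self _ he₁nn').trans (sub_le_self _ henn')⟩
      · exact ⟨hd5, le_refl _, (sub_le_self _ hχnn').trans (sub_le_self _ henn')⟩
  refine ⟨hmain, ?_⟩
  -- distinctness facts
  obtain ⟨a, ha, b, hb, hab⟩ := hK'2
  obtain ⟨k₂, hk₂K, hk₂i₁⟩ : ∃ k, k ∈ K' ∧ k ≠ i₁ := by
    by_cases h : a = i₁
    · exact ⟨b, hb, fun hh => hab (by rw [h, hh])⟩
    · exact ⟨a, ha, h⟩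
  have hk₂i : k₂ ≠ i := fun h => hiK' (h ▸ hk₂K)
  have n1 : y ≠ y - eA n i := by
    intro h
    have := congrFun h i
    simp only [Pi.sub_apply, heii] at this
    omega
  have n2 : y ≠ y - chi n K' := by
    intro h
    have := congrFun h i₁
    simp only [Pi.sub_apply, hχi₁] at this
    omega
  have n3 : y ≠ y - eA n i - eA n i₁ := by
    intro h
    have := congrFun h i
    simp only [Pi.sub_apply, heii, hei i i₁ hne_ii₁] at this
    omega
  have n4 : y ≠ y - eA n i - chi n K' := by
    intro h
    have := congrFun h i
    simp only [Pi.sub_apply, heii, hχi] at this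
    omega
  have n5 : y - eA n i ≠ y - chi n K' := by
    intro h
    have := congrFun h i
    simp only [Pi.sub_apply, heii, hχi] at this
    omega
  have n6 : y - eA n i ≠ y - eA n i - eA n i₁ := by
    intro h
    have := congrFun h i₁
    simp only [Pi.sub_apply, heii, hei i₁ i hne_ii₁.symm] at this
    omega
  have n7 : y - eA n i ≠ y - eA n i - chi n K' := by
    intro h
    have := congrFun h i₁
    simp only [Pi.sub_apply, heii, hei i₁ i hne_ii₁.symm, hχi₁] at this
    omega
  have n8 : y - chi n K' ≠ y - eA n i - eA n i₁ := by
    intro h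
    have := congrFun h i
    simp only [Pi.sub_apply, heii, hχi, hei i i₁ hne_ii₁] at this
    omega
  have n9 : y - chi n K' ≠ y - eA n i - chi n K' := by
    intro h
    have := congrFun h i
    simp only [Pi.sub_apply, heii, hχi] at this
    omega
  have n10 : y - eA n i - eA n i₁ ≠ y - eA n i - chi n K' := by
    intro h
    have := congrFun h k₂
    simp only [Pi.sub_apply, hei k₂ i hk₂i, hei k₂ i₁ hk₂i₁, hχmem k₂ hk₂K] at this
    omega
  have nm1 : y ∉ ({y - eA n i, y - chi n K', y - eA n i - eA n i₁,
      y - eA n i - chi n K'} : Set (ZMod (n+1) → ℤ)) := by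
    simp only [Set.mem_insert_iff, Set.mem_singleton_iff]
    push_neg
    exact ⟨n1, n2, n3, n4⟩
  have nm2 : y - eA n i ∉ ({y - chi n K', y - eA n i - eA n i₁,
      y - eA n i - chi n K'} : Set (ZMod (n+1) → ℤ)) := by
    simp only [Set.mem_insert_iff, Set.mem_singleton_iff]
    push_neg
    exact ⟨n5, n6, n7⟩
  have nm3 : y - chi n K' ∉ ({y - eA n i - eA n i₁,
      y - eA n i - chi n K'} : Set (ZMod (n+1) → ℤ)) := by
    simp only [Set.mem_insert_iff, Set.mem_singleton_iff]
    push_neg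
    exact ⟨n8, n9⟩
  rw [hmain, Set.ncard_insert_of_notMem nm1, Set.ncard_insert_of_notMem nm2,
    Set.ncard_insert_of_notMem nm3, Set.ncard_pair n10]
end
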